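/- Let G be an essential labelled graph. The sofic subshift Σ(G) is chain-transitive if and only if the linking graph G/≈ is strongly connected. -/

import Mathlib

/-! Common definitions: labelled graphs, walks, follower sets, the linking
relation, subshifts over `ℤ → A`, chains, and attractors. -/

structure LGraph (A : Type) where
  V : Type
  E : Type
  [finV : Finite V]
  [finE : Finite E]
  s : E → V
  t : E → V
  lab : E → A

attribute [instance] LGraph.finV LGraph.finE

namespace LGraph

variable {A : Type}

/-- `Walk G u v es` : the list of edges `es` forms a walk from `u` to `v`. -/
inductive Walk (G : LGraph A) : G.V → G.V → List G.E → Prop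
  | nil (v : G.V) : Walk G v v []
  | cons {w : G.V} {es : List G.E} (e : G.E) (h : Walk G (G.t e) w es) :
      Walk G (G.s e) w (e :: es)

/-- There is an edge from `u` to `v`. -/
def EdgeRel (G : LGraph A) (u v : G.V) : Prop := ∃ e : G.E, G.s e = u ∧ G.t e = v

/-- `v` is reachable from `u` by a directed walk. -/
def Reach (G : LGraph A) : G.V → G.V → Prop := Relation.ReflTransGen G.EdgeRel

/-- `u` and `v` lie in the same strongly connected component. -/
def SameComp (G : LGraph A) (u v : G.V) : Prop := G.Reach u v ∧ G.Reach v u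

/-- The number of strongly connected components of `G`. -/
noncomputable def numComponents (G : LGraph A) : ℕ :=
  Nat.card {K : Set G.V // ∃ v : G.V, K = {u : G.V | G.SameComp v u}}

/-- The restricted follower set of `v` : words labelling walks starting at `v`
that stay inside the strongly connected component of `v`. -/
def FollowR (G : LGraph A) (v : G.V) : Set (List A) :=
  {w | ∃ (u : G.V) (es : List G.E), G.Walk v u es ∧ es.map G.lab = w ∧
        ∀ e ∈ es, G.SameComp v (G.s e) ∧ G.SameComp v (G.t e)}

/-- Two vertices are linked iff their restricted follower sets have infinite
intersection. -/
def Linked (G : LGraph A) (u v : G.V) : Prop := (G.FollowR u ∩ G.FollowR v).Infinite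

/-- `≈` : the reflexive-transitive closure of the linked relation. -/
def Approx (G : LGraph A) : G.V → G.V → Prop := Relation.ReflTransGen G.Linked

/-- One step in the linking graph `G/≈` (lifted to `G`): either an edge of `G`
or a jump between linked vertices. -/
def GenStep (G : LGraph A) (u v : G.V) : Prop := G.EdgeRel u v ∨ G.Linked u v

/-- Reachability in the linking graph `G/≈`, expressed on vertices of `G`. -/
def GenReach (G : LGraph A) : G.V → G.V → Prop := Relation.ReflTransGen G.GenStep

/-- The language of `G` : words labelling finite walks in `G`. -/
def Lang (G : LGraph A) : Set (List A) :=
  {w | ∃ (u v : G.V) (es : List G.E), G.Walk u v es ∧ es.map G.lab = w}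

/-- `w` has a presentation in the subgraph of `G` induced by the vertex set `S`. -/
def PresIn (G : LGraph A) (S : Set G.V) (w : List A) : Prop :=
  ∃ (u v : G.V) (es : List G.E), G.Walk u v es ∧ es.map G.lab = w ∧
    u ∈ S ∧ v ∈ S ∧ ∀ e ∈ es, G.s e ∈ S ∧ G.t e ∈ S

/-- A presentation of the first `n` letters of `w`, with explicit vertex
sequence `v` and edge sequence `e`. -/
def PresFun (G : LGraph A) (n : ℕ) (w : ℕ → A) (v : ℕ → G.V) (e : ℕ → G.E) : Prop :=
  ∀ i < n, G.s (e i) = v i ∧ G.t (e i) = v (i + 1) ∧ G.lab (e i) = w i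

/-- `S` is a union of `≈`-equivalence classes, i.e. `S = π⁻¹(π(S))` for the
projection `π : G → G/≈`. -/
def SaturatedSet (G : LGraph A) (S : Set G.V) : Prop :=
  ∀ u v : G.V, G.Approx u v → (u ∈ S ↔ v ∈ S)

/-- No edge leaves `S` : together with saturation this says that the image of
`S` in `G/≈` is a terminal subgraph. -/
def ForwardClosed (G : LGraph A) (S : Set G.V) : Prop :=
  ∀ e : G.E, G.s e ∈ S → G.t e ∈ S

/-- Every vertex has an ingoing and an outgoing edge. -/
def Essential (G : LGraph A) : Prop :=
  ∀ v : G.V, (∃ e : G.E, G.t e = v) ∧ (∃ e : G.E, G.s e = v)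

/-- A biinfinite presentation of `x` (vertex sequence `v`, edge sequence `e`)
staying in the vertex set `S`. -/
def BiPresIn (G : LGraph A) (S : Set G.V) (x : ℤ → A) (v : ℤ → G.V) (e : ℤ → G.E) : Prop :=
  ∀ i : ℤ, G.s (e i) = v i ∧ G.t (e i) = v (i + 1) ∧ G.lab (e i) = x i ∧ v i ∈ S

/-- The subshift of biinfinite label sequences of biinfinite walks of `G`
staying in `S`. -/
def SigmaIn (G : LGraph A) (S : Set G.V) : Set (ℤ → A) :=
  {x | ∃ v e, G.BiPresIn S x v e}

/-- The sofic subshift `Σ(G)`. -/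
def Sigma' (G : LGraph A) : Set (ℤ → A) := G.SigmaIn Set.univ

/-- The linking graph `G/≈` is strongly connected. -/
def StronglyConnectedQuot (G : LGraph A) : Prop := ∀ u v : G.V, G.GenReach u v

/-- The linking graph `G/≈` is periodic : its vertices can be partitioned into
`n > 1` classes (indexed by `ZMod n`, each a union of `≈`-classes) so that every
edge advances the class index by one. -/
def PeriodicQuot (G : LGraph A) : Prop :=
  ∃ n : ℕ, 1 < n ∧ ∃ c : G.V → ZMod n,
    (∀ u v : G.V, G.Approx u v → c u = c v) ∧ ∀ e : G.E, c (G.t e) = c (G.s e) + 1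

/-- The label product `G * H`. -/
def labelProduct (G H : LGraph A) : LGraph A where
  V := G.V × H.V
  E := {p : G.E × H.E // G.lab p.1 = H.lab p.2}
  s := fun p => (G.s p.1.1, H.s p.1.2)
  t := fun p => (G.t p.1.1, H.t p.1.2)
  lab := fun p => G.lab p.1.1

end LGraph

section Subshift

variable {A : Type}

/-- The shift map `σ`. -/
def shift (x : ℤ → A) : ℤ → A := fun i => x (i + 1)

open Classical in
/-- The metric `ρ(x,y) = 2^{-n}` where `n` is minimal with `x_n ≠ y_n` or
`x_{-n} ≠ y_{-n}` (and `ρ(x,x) = 0`). -/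
noncomputable def rho (x y : ℤ → A) : ℝ :=
  if x = y then 0
  else (2 : ℝ) ^ (-((sInf {n : ℕ | ∃ i : ℤ, i.natAbs = n ∧ x i ≠ y i} : ℕ) : ℤ))

/-- Closedness with respect to the metric `rho`. -/
def RhoClosed (Sig : Set (ℤ → A)) : Prop :=
  ∀ x : ℤ → A, (∀ ε : ℝ, 0 < ε → ∃ y ∈ Sig, rho x y < ε) → x ∈ Sig

/-- A subshift : a closed, strongly shift-invariant subset of `A^ℤ`. -/
def IsSubshift (Sig : Set (ℤ → A)) : Prop :=
  RhoClosed Sig ∧ shift '' Sig = Sig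

/-- The language of the subshift `Sig` : all finite factors of its points. -/
def lang (Sig : Set (ℤ → A)) : Set (List A) :=
  {w | ∃ x ∈ Sig, ∃ k : ℤ, ∀ (i : ℕ) (h : i < w.length), w.get ⟨i, h⟩ = x (k + i)}

/-- The central factor `x_{[-l,l]}` of a biinfinite word. -/
def central (x : ℤ → A) (l : ℕ) : List A :=
  (List.range (2 * l + 1)).map fun i => x ((i : ℤ) - (l : ℤ))

/-- `ChainWord L u v n w` : `w` is a chain of length `n` from `u` to `v` in the
language `L` : `|w| = n + |u|`, `w` has prefix `u` and suffix `v`, and every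
factor of `w` of length at most `|u|` belongs to `L`. -/
def ChainWord (L : Set (List A)) (u v : List A) (n : ℕ) (w : List A) : Prop :=
  u.length = v.length ∧ w.length = n + u.length ∧
  w.take u.length = u ∧ w.drop n = v ∧
  ∀ z : List A, z <:+: w → z.length ≤ u.length → z ∈ L

/-- An `ε`-chain of length `n > 0` from `x` to `y` inside `Sig`. -/
def EpsChain (Sig : Set (ℤ → A)) (ε : ℝ) (n : ℕ) (x y : ℤ → A) : Prop :=
  0 < n ∧ ∃ z : ℕ → ℤ → A, z 0 = x ∧ z n = y ∧ (∀ i ≤ n, z i ∈ Sig) ∧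
    ∀ i < n, rho (shift (z i)) (z (i + 1)) < ε

/-- The chain relation of `(Sig, σ)`. -/
def ChainRel (Sig : Set (ℤ → A)) (x y : ℤ → A) : Prop :=
  ∀ ε : ℝ, 0 < ε → ∃ n : ℕ, EpsChain Sig ε n x y

/-- Chain-transitivity. -/
def ChainTransitive (Sig : Set (ℤ → A)) : Prop :=
  ∀ x ∈ Sig, ∀ y ∈ Sig, ChainRel Sig x y

/-- Chain-mixing. -/
def ChainMixing (Sig : Set (ℤ → A)) : Prop :=
  ∀ x ∈ Sig, ∀ y ∈ Sig, ∀ ε : ℝ, 0 < ε → ∃ k : ℕ, ∀ n, k < n → EpsChain Sig ε n x y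

/-- Distance from a point to a set, with respect to `rho`. -/
noncomputable def distTo (x : ℤ → A) (Y : Set (ℤ → A)) : ℝ := sInf (rho x '' Y)

/-- `Y` is an attractor of the dynamical system `(Sig, σ)`. -/
def IsAttractor (Sig Y : Set (ℤ → A)) : Prop :=
  Y.Nonempty ∧ Y ⊆ Sig ∧ RhoClosed Y ∧ shift '' Y = Y ∧
  (∀ ε : ℝ, 0 < ε → ∃ δ : ℝ, 0 < δ ∧ ∀ x ∈ Sig, distTo x Y < δ →
    ∀ n : ℕ, 0 < n → distTo (shift^[n] x) Y < ε) ∧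
  (∃ δ : ℝ, 0 < δ ∧ ∀ x ∈ Sig, distTo x Y < δ →
    Filter.Tendsto (fun n : ℕ => distTo (shift^[n] x) Y) Filter.atTop (nhds 0))

end Subshift

/-!
An `ε`-chain in a subshift amounts to a single biinfinite word whose windows of a fixed length
`M` (depending on `ε`) all occur in points of the subshift; for `Σ(G)` this means that every
window has a presentation in `G`.

If `G/≈` is strongly connected, take `x` up to a vertex `b` of its presentation and `y` from a
vertex `c`, and follow a path from `b` to `c` in `G/≈`. An edge is simply appended. A jump
between linked vertices `b`, `b'` appends a common word, of length at least `M`, of their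
restricted follower sets, followed by a walk back to `b'` inside its component: every window
is then read either from `b` or from `b'`.

Conversely, glue an `ε`-chain from a point leaving `u` to a point entering `v` into one word,
and let `S` be the set of vertices reachable from `u` in `G/≈`. Two presentations of a word of
length `κ = |V × V|` pass through a common pair of vertices twice, and pumping that cycle shows
that the two vertices are linked; so if one presentation stays in `S`, every other one meets
`S`. Propagating this along the glued word shows that the presentation of the final point
meets `S`, hence `v ∈ S`.
-/

section ChainWindows

variable {A : Type}

lemma rho_le_of_agree {x y : ℤ → A} {N : ℕ} (h : ∀ i : ℤ, i.natAbs ≤ N → x i = y i) :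
    rho x y ≤ (2 : ℝ) ^ (-(N : ℤ) - 1) := by
  unfold rho
  split_ifs with hxy
  · positivity
  · have hne : {n : ℕ | ∃ i : ℤ, i.natAbs = n ∧ x i ≠ y i}.Nonempty := by
      by_contra hcon
      exact hxy (funext fun i => by_contra fun hi => hcon ⟨i.natAbs, i, rfl, hi⟩)
    have hge : N + 1 ≤ sInf {n : ℕ | ∃ i : ℤ, i.natAbs = n ∧ x i ≠ y i} := by
      refine le_csInf hne fun b hb => ?_
      obtain ⟨i, rfl, hne⟩ := hb
      by_contra
      exact hne (h i (by omega))
    exact zpow_le_zpow_right₀ one_le_two (by omega)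

lemma agree_of_rho_lt {x y : ℤ → A} {N : ℕ} (h : rho x y < (2 : ℝ) ^ (-(N : ℤ)))
    (i : ℤ) (hi : i.natAbs ≤ N) : x i = y i := by
  unfold rho at h
  split_ifs at h with hxy
  · rw [hxy]
  · by_contra hne
    have hmem : i.natAbs ∈ {n : ℕ | ∃ i : ℤ, i.natAbs = n ∧ x i ≠ y i} := ⟨i, rfl, hne⟩
    have hle := (Nat.sInf_le hmem).trans hi
    have := zpow_le_zpow_right₀ (one_le_two (α := ℝ)) (neg_le_neg (Int.ofNat_le.mpr hle))
    linarith

lemma exists_two_zpow_lt {ε : ℝ} (hε : 0 < ε) : ∃ N : ℕ, (2 : ℝ) ^ (-(N : ℤ) - 1) < ε := by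
  obtain ⟨N, hN⟩ := exists_pow_lt_of_lt_one hε (by norm_num : (1 / 2 : ℝ) < 1)
  refine ⟨N, lt_of_le_of_lt ?_ hN⟩
  rw [one_div, inv_pow, ← zpow_natCast, ← zpow_neg]
  exact zpow_le_zpow_right₀ one_le_two (by omega)

variable {Sig : Set (ℤ → A)}

lemma epsChain_of_windows {ε : ℝ} {N n : ℕ} {x y U : ℤ → A} (hn : 0 < n)
    (hε : (2 : ℝ) ^ (-(N : ℤ) - 1) < ε) (hx : x ∈ Sig) (hy : y ∈ Sig)
    (hUx : ∀ j : ℤ, j ≤ N + 1 → x j = U j) (hUy : ∀ j : ℤ, -N ≤ j → y j = U (n + j))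
    (hU : ∀ k : ℤ, ∃ z ∈ Sig, ∀ j : ℤ, -N ≤ j → j ≤ N + 1 → z j = U (k + j)) :
    EpsChain Sig ε n x y := by
  classical
  choose zU hzU hzUwin using hU
  let z : ℕ → ℤ → A := fun k => if k = 0 then x else if k = n then y else zU k
  have hz : ∀ k ≤ n, z k ∈ Sig ∧ ∀ j : ℤ, -N ≤ j → j ≤ N + 1 → z k j = U (k + j) := by
    intro k hk
    by_cases h0 : k = 0
    · subst h0
      exact ⟨by simpa [z] using hx, fun j _ hj => by simpa [z] using hUx j hj⟩
    by_cases hkn : k = n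
    · subst hkn
      exact ⟨by simpa [z, h0] using hy, fun j hj _ => by simpa [z, h0] using hUy j hj⟩
    · simp only [z, if_neg h0, if_neg hkn]
      exact ⟨hzU k, hzUwin k⟩
  refine ⟨hn, z, by simp [z], by simp [z, hn.ne'], fun k hk => (hz k hk).1, fun i hi => ?_⟩
  refine lt_of_le_of_lt (rho_le_of_agree fun j hj => ?_) hε
  show z i (j + 1) = z (i + 1) j
  rw [(hz i hi.le).2 (j + 1) (by omega) (by omega), (hz (i + 1) hi).2 j (by omega) (by omega)]
  push_cast
  ring_nf

lemma chain_agree {L n : ℕ} {z : ℕ → ℤ → A}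
    (hz : ∀ i < n, rho (shift (z i)) (z (i + 1)) < (2 : ℝ) ^ (-(L : ℤ)))
    {i k : ℕ} (hik : i ≤ k) (hkn : k ≤ n) {t : ℤ} (ht₁ : k - L ≤ t) (ht₂ : t ≤ i + L) :
    z i (t - i) = z k (t - k) := by
  induction k, hik using Nat.le_induction with
  | base => rfl
  | succ k hik ih =>
    rw [ih (by omega) (by push_cast at ht₁; omega)]
    have := agree_of_rho_lt (hz k (by omega)) (t - k - 1) (by push_cast at ht₁; omega)
    simp only [shift, sub_add_cancel] at this
    rw [this]
    push_cast
    ring_nf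

lemma exists_word_of_epsChain {L n : ℕ} {x y : ℤ → A}
    (h : EpsChain Sig ((2 : ℝ) ^ (-(L : ℤ))) n x y) :
    ∃ W : ℤ → A, (∀ t : ℤ, t ≤ L → W t = x t) ∧ (∀ t : ℤ, n - L ≤ t → W t = y (t - n)) ∧
      ∀ t : ℤ, ∃ z ∈ Sig, ∃ c : ℤ, ∀ k : ℤ, t ≤ k → k ≤ t + L → W k = z (k + c) := by
  obtain ⟨-, z, rfl, rfl, hzS, hz⟩ := h
  let c : ℤ → ℕ := fun t => min t.toNat n
  have hW : ∀ i ≤ n, ∀ t : ℤ, i - L ≤ t → t ≤ i + L → z (c t) (t - c t) = z i (t - i) := by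
    intro i hi t ht₁ ht₂
    have hct : (c t : ℤ) = min (max t 0) n := by simp only [c]; omega
    rcases le_total (c t) i with hci | hci
    · exact chain_agree hz hci hi ht₁ (by omega)
    · exact (chain_agree hz hci (min_le_right _ _) (by omega) ht₂).symm
  have hleft : ∀ t : ℤ, t ≤ L → z (c t) (t - c t) = z 0 t := by
    intro t ht
    rcases lt_or_ge t 0 with h0 | h0
    · simp [c, Int.toNat_of_nonpos h0.le]
    · simpa using hW 0 (Nat.zero_le _) t (by omega) (by simpa using ht)
  have hright : ∀ t : ℤ, n - L ≤ t → z (c t) (t - c t) = z n (t - n) := by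
    intro t ht
    rcases le_or_gt (n : ℤ) t with hnt | hnt
    · simp only [c, min_eq_right (show n ≤ t.toNat by omega)]
    · exact hW n le_rfl t ht (by omega)
  refine ⟨fun t => z (c t) (t - c t), hleft, hright, fun t => ?_⟩
  rcases lt_or_ge t 0 with h0 | h0
  · exact ⟨z 0, hzS 0 (Nat.zero_le _), 0, fun k _ hk => by simpa using hleft k (by omega)⟩
  rcases le_or_gt t n with htn | htn
  · refine ⟨z t.toNat, hzS _ (by omega), -t.toNat, fun k hk₁ hk₂ => ?_⟩
    show z (c k) (k - c k) = _
    rw [hW t.toNat (by omega) k (by omega) (by omega), sub_eq_add_neg]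
  · refine ⟨z n, hzS n le_rfl, -n, fun k hk₁ _ => ?_⟩
    show z (c k) (k - c k) = _
    rw [hright k (by omega), sub_eq_add_neg]

end ChainWindows

lemma exists_lt_map_eq {β : Type*} [Finite β] (f : ℤ → β) (a : ℤ) :
    ∃ i j, a ≤ i ∧ i < j ∧ j ≤ a + Nat.card β ∧ f i = f j := by
  have := Fintype.ofFinite β
  obtain ⟨i, j, hij, hf⟩ := Fintype.exists_ne_map_eq_of_card_lt
    (fun i : Fin (Nat.card β + 1) => f (a + i)) (by simp [Nat.card_eq_fintype_card])
  have := i.isLt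
  have := j.isLt
  rcases lt_or_gt_of_ne (Fin.val_ne_of_ne hij) with h | h
  · exact ⟨a + i, a + j, by omega, by omega, by omega, hf⟩
  · exact ⟨a + j, a + i, by omega, by omega, by omega, hf.symm⟩

namespace LGraph

variable {A : Type} {G : LGraph A}

/-- `PresFun` on an interval `[a, b)` of `ℤ`, so that windows of biinfinite words can be
glued and shifted without reindexing. -/
def PresOn (G : LGraph A) (a b : ℤ) (w : ℤ → A) (v : ℤ → G.V) (e : ℤ → G.E) : Prop :=
  ∀ i, a ≤ i → i < b → G.s (e i) = v i ∧ G.t (e i) = v (i + 1) ∧ G.lab (e i) = w i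

namespace PresOn

variable {a b c : ℤ} {w w' : ℤ → A} {v v' : ℤ → G.V} {e e' : ℤ → G.E}

lemma mono (h : G.PresOn a b w v e) {a' b' : ℤ} (ha : a ≤ a') (hb : b' ≤ b) :
    G.PresOn a' b' w v e :=
  fun i h₁ h₂ => h i (ha.trans h₁) (h₂.trans_le hb)

lemma congr_word (h : G.PresOn a b w v e) (hw : ∀ i, a ≤ i → i < b → w i = w' i) :
    G.PresOn a b w' v e :=
  fun i h₁ h₂ => (h i h₁ h₂).imp_right (And.imp_right fun hl => hl.trans (hw i h₁ h₂))

lemma glue (h : G.PresOn a b w v e) (h' : G.PresOn b c w' v' e') (hb : v b = v' b) :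
    G.PresOn a c (fun i => if i < b then w i else w' i) (fun i => if i ≤ b then v i else v' i)
      (fun i => if i < b then e i else e' i) := by
  intro i h₁ h₂
  by_cases hi : i < b
  · simpa only [if_pos hi, if_pos hi.le, if_pos (show i + 1 ≤ b by omega)] using h i h₁ hi
  · obtain ⟨hs, ht, hl⟩ := h' i (by omega) h₂
    simp only [if_neg hi, if_neg (show ¬ i + 1 ≤ b by omega)]
    refine ⟨?_, ht, hl⟩
    split_ifs with hib
    · obtain rfl : i = b := by omega
      exact hs.trans hb.symm
    · exact hs

lemma translate (h : G.PresOn a b w v e) (c : ℤ) :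
    G.PresOn (a - c) (b - c) (fun i => w (i + c)) (fun i => v (i + c)) (fun i => e (i + c)) := by
  intro i h₁ h₂
  obtain ⟨hs, ht, hl⟩ := h (i + c) (by omega) (by omega)
  exact ⟨hs, by rw [ht, add_right_comm], hl⟩

lemma reach (h : G.PresOn a b w v e) {i j : ℤ} (hai : a ≤ i) (hij : i ≤ j) (hjb : j ≤ b) :
    G.Reach (v i) (v j) := by
  induction j, hij using Int.leInduction with
  | base => exact .refl
  | succ j hij ih =>
    obtain ⟨hs, ht, -⟩ := h j (by omega) (by omega)
    exact (ih (by omega)).tail ⟨e j, hs, ht⟩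

lemma walk {n : ℕ} (h : G.PresOn a (a + n) w v e) :
    G.Walk (v a) (v (a + n)) (List.ofFn fun i : Fin n => e (a + i)) := by
  induction n generalizing a with
  | zero => simpa using Walk.nil (v a)
  | succ n ih =>
    obtain ⟨hs, ht, -⟩ := h a le_rfl (by omega)
    have htail := ih (a := a + 1) (h.mono (by omega) (by push_cast; omega))
    rw [List.ofFn_succ, ← hs]
    push_cast at htail ⊢
    simp only [Fin.val_zero, Nat.cast_zero, add_zero, Fin.val_succ, Nat.cast_add, Nat.cast_one]
    rw [← ht] at htail
    convert Walk.cons (e a) htail using 2 <;> ring_nf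

end PresOn

lemma Reach.genReach {u v : G.V} (h : G.Reach u v) : G.GenReach u v :=
  Relation.ReflTransGen.mono (fun _ _ => Or.inl) _ _ h

lemma Reach.mem {S : Set G.V} (hS : ∀ p q, G.GenStep p q → p ∈ S → q ∈ S) {u v : G.V}
    (h : G.Reach u v) (hu : u ∈ S) : v ∈ S := by
  induction h with
  | refl => exact hu
  | tail _ hst ih => exact hS _ _ (Or.inl hst) ih

lemma BiPresIn.translate {S : Set G.V} {x : ℤ → A} {v : ℤ → G.V} {e : ℤ → G.E}
    (h : G.BiPresIn S x v e) (c : ℤ) :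
    G.BiPresIn S (fun i => x (i + c)) (fun i => v (i + c)) (fun i => e (i + c)) := fun i => by
  obtain ⟨hs, ht, hl, hS⟩ := h (i + c)
  exact ⟨hs, by rw [ht, add_right_comm], hl, hS⟩

lemma biPresIn_univ_of_presOn {x : ℤ → A} {v : ℤ → G.V} {e : ℤ → G.E}
    (h : ∀ i, G.PresOn i (i + 1) x v e) : G.BiPresIn Set.univ x v e := fun i => by
  obtain ⟨hs, ht, hl⟩ := h i i le_rfl (lt_add_one i)
  exact ⟨hs, ht, hl, trivial⟩

lemma BiPresIn.presOn {S : Set G.V} {x : ℤ → A} {v : ℤ → G.V} {e : ℤ → G.E}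
    (h : G.BiPresIn S x v e) (a b : ℤ) : G.PresOn a b x v e :=
  fun i _ _ => (h i).imp_right fun h => h.imp_right fun h => h.1

lemma Walk.append {u u' u'' : G.V} {es fs : List G.E} (h : G.Walk u u' es)
    (h' : G.Walk u' u'' fs) : G.Walk u u'' (es ++ fs) := by
  induction h with
  | nil => exact h'
  | cons f _ ih => exact .cons f (ih h')

lemma Walk.flatten_replicate {u : G.V} {es : List G.E} (h : G.Walk u u es) (k : ℕ) :
    G.Walk u u (List.replicate k es).flatten := by
  induction k with
  | zero => exact .nil u
  | succ k ih => simpa [List.replicate_succ] using h.append ih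

lemma Walk.reach_of_forall_reach {u u' z : G.V} {es : List G.E} (h : G.Walk u u' es)
    (hu : G.Reach u z) (hes : ∀ f ∈ es, G.Reach (G.t f) z) : G.Reach u' z := by
  induction h with
  | nil => exact hu
  | cons f _ ih =>
    exact ih (hes f List.mem_cons_self) fun f' hf' => hes f' (List.mem_cons_of_mem _ hf')

lemma Walk.exists_presOn [Nonempty G.E] {u u' : G.V} {es : List G.E} (h : G.Walk u u' es)
    (a : ℤ) : ∃ v e, G.PresOn a (a + es.length) (fun i => G.lab (e i)) v e ∧ v a = u ∧
      v (a + es.length) = u' ∧ ∀ (i : ℕ) (hi : i < es.length), e (a + i) = es[i] := by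
  induction h generalizing a with
  | nil u => exact ⟨fun _ => u, fun _ => Classical.arbitrary _,
      fun i h₁ h₂ => by simp at h₂; omega, rfl, by simp, by simp⟩
  | cons f _ ih =>
    obtain ⟨v, e, hp, hv₀, hv₁, he⟩ := ih (a + 1)
    refine ⟨fun i => if i = a then G.s f else v i, fun i => if i = a then f else e i,
      fun i h₁ h₂ => ?_, by simp, ?_, fun i hi => ?_⟩
    · rcases h₁.eq_or_lt with rfl | h₁
      · simp [hv₀]
      · simp only [if_neg h₁.ne', if_neg (show i + 1 ≠ a by omega)]
        obtain ⟨hs, ht, -⟩ := hp i (by omega) (by simp only [List.length_cons] at h₂; omega)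
        exact ⟨hs, ht, trivial⟩
    · simp only [List.length_cons]
      rw [if_neg (by omega)]
      convert hv₁ using 2
      push_cast
      ring
    · cases i with
      | zero => simp
      | succ i =>
        simp only [if_neg (show a + (i + 1 : ℕ) ≠ a by omega), List.getElem_cons_succ]
        convert he i (by simpa using hi) using 2
        push_cast
        ring

lemma PresOn.flatten_replicate_mem_followR {a : ℤ} {n : ℕ} {w : ℤ → A} {v : ℤ → G.V}
    {e : ℤ → G.E} (h : G.PresOn a (a + n) w v e) (hv : v (a + n) = v a) (k : ℕ) :
    (List.replicate k (List.ofFn fun i : Fin n => w (a + i))).flatten ∈ G.FollowR (v a) := by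
  have hcycle := h.walk
  rw [hv] at hcycle
  have hcomp : ∀ j, a ≤ j → j ≤ a + n → G.SameComp (v a) (v j) := fun j h₁ h₂ =>
    ⟨h.reach le_rfl h₁ h₂, hv ▸ h.reach h₁ h₂ le_rfl⟩
  refine ⟨v a, _, hcycle.flatten_replicate k, ?_, fun f hf => ?_⟩
  · simp only [List.map_flatten, List.map_replicate, List.map_ofFn]
    congr 3
    funext i
    exact (h (a + i) (by omega) (by omega)).2.2
  · obtain ⟨i, rfl⟩ : ∃ i : Fin n, e (a + i) = f := by
      simp only [List.mem_flatten, List.mem_replicate] at hf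
      obtain ⟨_, ⟨-, rfl⟩, hf⟩ := hf
      simpa using hf
    obtain ⟨hs, ht, -⟩ := h (a + i) (by omega) (by omega)
    rw [hs, ht]
    exact ⟨hcomp _ (by omega) (by omega), hcomp _ (by omega) (by omega)⟩

lemma linked_of_presOn {a : ℤ} {n : ℕ} (hn : 0 < n) {w : ℤ → A} {v v' : ℤ → G.V}
    {e e' : ℤ → G.E} (h : G.PresOn a (a + n) w v e) (h' : G.PresOn a (a + n) w v' e')
    (hv : v (a + n) = v a) (hv' : v' (a + n) = v' a) : G.Linked (v a) (v' a) :=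
  Set.infinite_of_injective_forall_mem
    (f := fun k : ℕ => (List.replicate k (List.ofFn fun i : Fin n => w (a + i))).flatten)
    (fun k k' hk => by
      simpa [List.length_flatten, List.sum_replicate, hn.ne'] using congrArg List.length hk)
    fun k => ⟨h.flatten_replicate_mem_followR hv k, h'.flatten_replicate_mem_followR hv' k⟩

lemma Linked.exists_presOn [Finite A] [Nonempty G.E] {u u' : G.V} (h : G.Linked u u')
    (M : ℕ) (a : ℤ) :
    ∃ ℓ : ℕ, M ≤ ℓ ∧ ∃ w v e v' e', G.PresOn a (a + ℓ) w v e ∧ G.PresOn a (a + ℓ) w v' e' ∧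
      v a = u ∧ v' a = u' ∧ G.Reach (v' (a + ℓ)) u' := by
  obtain ⟨wl, ⟨hu, hu'⟩, hlen⟩ : ∃ wl ∈ G.FollowR u ∩ G.FollowR u', M ≤ wl.length := by
    by_contra! hcon
    exact h ((List.finite_length_lt A M).subset fun wl hwl => hcon wl hwl)
  obtain ⟨u₁, es, hes, rfl, -⟩ := hu
  obtain ⟨u₂, es', hes', hlab, hcomp⟩ := hu'
  have hlen' : es'.length = es.length := by simpa using congrArg List.length hlab
  obtain ⟨v, e, hp, hv₀, -, he⟩ := hes.exists_presOn a
  obtain ⟨v', e', hp', hv₀', hv₁', he'⟩ := hes'.exists_presOn a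
  rw [hlen'] at hp' hv₁'
  refine ⟨es.length, by simpa using hlen, _, v, e, v', e', hp,
    hp'.congr_word fun i h₁ h₂ => ?_, hv₀, hv₀', ?_⟩
  · obtain ⟨k, rfl⟩ : ∃ k : ℕ, i = a + k := ⟨(i - a).toNat, by omega⟩
    have hk : k < es.length := by omega
    rw [he k hk, he' k (hlen' ▸ hk)]
    have := List.getElem_of_eq hlab (i := k) (by simp [hlen', hk])
    rwa [List.getElem_map, List.getElem_map] at this
  · exact hv₁' ▸ hes'.reach_of_forall_reach .refl fun f hf => (hcomp f hf).2.2

namespace Essential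

noncomputable def outEdge (hG : G.Essential) (u : G.V) : G.E := (hG u).2.choose

noncomputable def inEdge (hG : G.Essential) (u : G.V) : G.E := (hG u).1.choose

lemma s_outEdge (hG : G.Essential) (u : G.V) : G.s (hG.outEdge u) = u := (hG u).2.choose_spec

lemma t_inEdge (hG : G.Essential) (u : G.V) : G.t (hG.inEdge u) = u := (hG u).1.choose_spec

noncomputable def forwardRay (hG : G.Essential) (u : G.V) : ℕ → G.V
  | 0 => u
  | k + 1 => G.t (hG.outEdge (hG.forwardRay u k))

noncomputable def backwardRay (hG : G.Essential) (u : G.V) : ℕ → G.V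
  | 0 => u
  | k + 1 => G.s (hG.inEdge (hG.backwardRay u k))

lemma exists_biPresIn_through (hG : G.Essential) (u : G.V) (a : ℤ) :
    ∃ x v e, G.BiPresIn Set.univ x v e ∧ v a = u := by
  let v : ℤ → G.V := fun i =>
    if a ≤ i then hG.forwardRay u (i - a).toNat else hG.backwardRay u (a - i).toNat
  let e : ℤ → G.E := fun i =>
    if a ≤ i then hG.outEdge (hG.forwardRay u (i - a).toNat)
    else hG.inEdge (hG.backwardRay u (a - i - 1).toNat)
  refine ⟨fun i => G.lab (e i), v, e, biPresIn_univ_of_presOn fun i j h₁ h₂ => ?_,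
    by simp only [v, le_refl, if_true, sub_self]; rfl⟩
  obtain rfl : j = i := by omega
  refine ⟨?_, ?_, rfl⟩
  · by_cases hi : a ≤ j
    · simp only [e, v, if_pos hi, s_outEdge]
    · simp only [e, v, if_neg hi, show (a - j).toNat = (a - j - 1).toNat + 1 by omega]
      rfl
  · by_cases hi : a ≤ j
    · simp only [e, v, if_pos hi, if_pos (show a ≤ j + 1 by omega),
        show (j + 1 - a).toNat = (j - a).toNat + 1 by omega]
      rfl
    · simp only [e, v, if_neg hi, t_inEdge]
      split_ifs with hj
      · rw [show (a - j - 1).toNat = 0 by omega, show (j + 1 - a).toNat = 0 by omega]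
        rfl
      · congr 2
        omega

lemma exists_mem_sigma'_of_presOn (hG : G.Essential) {a b : ℤ} (hab : a ≤ b) {w : ℤ → A}
    {v : ℤ → G.V} {e : ℤ → G.E} (h : G.PresOn a b w v e) :
    ∃ x ∈ G.Sigma', ∀ i, a ≤ i → i < b → x i = w i := by
  obtain ⟨xl, vl, el, hl, hvl⟩ := hG.exists_biPresIn_through (v a) a
  obtain ⟨xr, vr, er, hr, hvr⟩ := hG.exists_biPresIn_through (v b) b
  have hb : (if b ≤ a then vl b else v b) = vr b := by
    rcases hab.eq_or_lt with rfl | hab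
    · simp [hvl, hvr]
    · simp [not_le.mpr hab, hvr]
  have hP := fun i => ((hl.presOn i a).glue h hvl).glue (hr.presOn b (i + 1)) hb
  exact ⟨_, ⟨_, _, biPresIn_univ_of_presOn hP⟩, fun i h₁ h₂ => by simp [h₂, not_lt.mpr h₁]⟩

end Essential

def LocallyContinuable (G : LGraph A) (M : ℕ) (L : ℤ → A) (p : ℤ) (b : G.V) : Prop :=
  ∀ (r : ℤ) (R : ℤ → A) (vR : ℤ → G.V) (eR : ℤ → G.E), G.PresOn p r R vR eR → vR p = b →
    ∀ t, t + M ≤ r → ∃ v e, G.PresOn t (t + M) (fun i => if i < p then L i else R i) v e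

lemma BiPresIn.locallyContinuable {S : Set G.V} {x : ℤ → A} {v : ℤ → G.V} {e : ℤ → G.E}
    (h : G.BiPresIn S x v e) (M : ℕ) (p : ℤ) : G.LocallyContinuable M x p (v p) :=
  fun _ _ _ _ hR hp t ht => ⟨_, _, ((h.presOn t p).glue hR hp.symm).mono le_rfl ht⟩

namespace LocallyContinuable

variable {M : ℕ} {L : ℤ → A} {p : ℤ} {b c : G.V}

lemma edge {f : G.E} (hL : G.LocallyContinuable M L p (G.s f)) :
    G.LocallyContinuable M (fun i => if i < p then L i else G.lab f) (p + 1) (G.t f) := by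
  intro r R vR eR hR hp t ht
  have hf : G.PresOn p (p + 1) (fun _ => G.lab f) (fun i => if i ≤ p then G.s f else G.t f)
      (fun _ => f) := by
    intro i h₁ h₂
    obtain rfl : i = p := by omega
    simp
  obtain ⟨v, e, h⟩ := hL r _ _ _ (hf.glue hR (by simpa using hp.symm)) (by simp) t ht
  refine ⟨v, e, h.congr_word fun i _ _ => ?_⟩
  dsimp only
  split_ifs <;> first | rfl | omega

lemma jump {ℓ : ℕ} (hL : G.LocallyContinuable M L p b) (hℓ : M ≤ ℓ) {w : ℤ → A}
    {v v' : ℤ → G.V} {e e' : ℤ → G.E} (h : G.PresOn p (p + ℓ) w v e) (hv : v p = b)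
    (h' : G.PresOn p (p + ℓ) w v' e') :
    G.LocallyContinuable M (fun i => if i < p then L i else w i) (p + ℓ) (v' (p + ℓ)) := by
  intro r R vR eR hR hp t ht
  -- Since `M ≤ ℓ`, a window either ends by `p + ℓ`, where the walk `v` from `b` presents it,
  -- or starts after `p`, where the walk `v'` continued by `vR` does.
  by_cases hleft : t + M ≤ p + ℓ
  · obtain ⟨v₁, e₁, h₁⟩ := hL (p + ℓ) w v e h hv t hleft
    refine ⟨v₁, e₁, h₁.congr_word fun i _ hi => ?_⟩
    simp only [show i < p + ℓ by omega, if_true]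
  · refine ⟨_, _, ((h'.glue hR hp.symm).mono (by omega) ht).congr_word fun i hi _ => ?_⟩
    simp only [show ¬ i < p by omega, if_false]

lemma reach (hL : G.LocallyContinuable M L p b) (h : G.Reach b c) :
    ∃ L' q, p ≤ q ∧ (∀ i < p, L' i = L i) ∧ G.LocallyContinuable M L' q c := by
  induction h with
  | refl => exact ⟨L, p, le_rfl, fun _ _ => rfl, hL⟩
  | tail _ hbc ih =>
    obtain ⟨L', q, hpq, hL'L, hL'⟩ := ih
    obtain ⟨f, rfl, rfl⟩ := hbc
    exact ⟨_, q + 1, by omega, fun i hi => by simp [show i < q by omega, hL'L i hi], hL'.edge⟩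

lemma linked [Finite A] [Nonempty G.E] (hL : G.LocallyContinuable M L p b) (h : G.Linked b c) :
    ∃ L' q, p ≤ q ∧ (∀ i < p, L' i = L i) ∧ G.LocallyContinuable M L' q c := by
  obtain ⟨ℓ, hℓ, w, v, e, v', e', hp, hp', hv, hv', hret⟩ := h.exists_presOn M p
  obtain ⟨L', q, hq, hL'L, hL'⟩ := (hL.jump hℓ hp hv hp').reach hret
  exact ⟨L', q, by omega, fun i hi => by simp [hL'L i (by omega), hi], hv' ▸ hL'⟩

lemma genReach [Finite A] [Nonempty G.E] (hL : G.LocallyContinuable M L p b)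
    (h : G.GenReach b c) :
    ∃ L' q, p ≤ q ∧ (∀ i < p, L' i = L i) ∧ G.LocallyContinuable M L' q c := by
  induction h with
  | refl => exact ⟨L, p, le_rfl, fun _ _ => rfl, hL⟩
  | tail _ hstep ih =>
    obtain ⟨L', q, hpq, hL'L, hL'⟩ := ih
    obtain ⟨L'', q', hq, hL''L', hL''⟩ :=
      hstep.elim (fun he => hL'.reach (.single he)) hL'.linked
    exact ⟨L'', q', hpq.trans hq, fun i hi => (hL''L' i (by omega)).trans (hL'L i hi), hL''⟩

end LocallyContinuable

theorem chainTransitive_sigma'_of_stronglyConnectedQuot [Finite A] (hG : G.Essential)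
    (hsc : G.StronglyConnectedQuot) : ChainTransitive G.Sigma' := by
  rintro x ⟨vx, ex, hx⟩ y ⟨vy, ey, hy⟩ ε hε
  have : Nonempty G.E := ⟨ex 0⟩
  obtain ⟨N, hN⟩ := exists_two_zpow_lt hε
  obtain ⟨L, q, hq, hLx, hL⟩ :=
    (hx.locallyContinuable (2 * N + 2) (N + 2)).genReach (hsc _ (vy (-N - 1)))
  obtain ⟨n, hn⟩ : ∃ n : ℕ, (n : ℤ) = q + N + 1 := ⟨(q + N + 1).toNat, by omega⟩
  let U : ℤ → A := fun i => if i < q then L i else y (i - n)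
  have hU : ∀ t, ∃ v e, G.PresOn t (t + (2 * N + 2 : ℕ)) U v e := fun t =>
    hL _ _ _ _ (((hy.translate (-n)).presOn q (t + (2 * N + 2 : ℕ))).congr_word
      fun i _ _ => by simp [sub_eq_add_neg]) (by simp [hn]; ring_nf) t le_rfl
  refine ⟨n, epsChain_of_windows (Sig := G.Sigma') (N := N) (n := n) (U := U) (by omega) hN
    ⟨vx, ex, hx⟩ ⟨vy, ey, hy⟩
    (fun j hj => by rw [show U j = L j from if_pos (by omega), hLx j (by omega)])
    (fun j hj => by
      rw [show U (n + j) = y (n + j - n) from if_neg (by omega), add_sub_cancel_left])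
    fun k => ?_⟩
  obtain ⟨v, e, h⟩ := hU (k - N)
  obtain ⟨z, hz, hzU⟩ := hG.exists_mem_sigma'_of_presOn (by omega)
    ((h.translate k).mono (a' := -N) (b' := N + 2) (by omega) (by push_cast; omega))
  exact ⟨z, hz, fun j h₁ h₂ => by rw [hzU j h₁ (by omega), add_comm]⟩

def WindowMeets (G : LGraph A) (S : Set G.V) (n : ℕ) (W : ℤ → A) (t : ℤ) : Prop :=
  ∀ v e, G.PresOn t (t + n) W v e → ∃ j, t ≤ j ∧ j ≤ t + n ∧ v j ∈ S

namespace WindowMeets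

variable {S : Set G.V} {W : ℤ → A} {t : ℤ} {v : ℤ → G.V} {e : ℤ → G.E}

lemma of_presOn (hS : ∀ p q, G.GenStep p q → p ∈ S → q ∈ S)
    (h : G.PresOn t (t + Nat.card (G.V × G.V)) W v e)
    (hv : ∀ j, t ≤ j → j ≤ t + Nat.card (G.V × G.V) → v j ∈ S) :
    G.WindowMeets S (Nat.card (G.V × G.V)) W t := by
  intro v' e' h'
  obtain ⟨i, j, hti, hij, hj, hvv⟩ := exists_lt_map_eq (fun i => (v i, v' i)) t
  obtain ⟨n, rfl⟩ : ∃ n : ℕ, j = i + n := ⟨(j - i).toNat, by omega⟩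
  simp only [Prod.mk.injEq] at hvv
  have hlk := linked_of_presOn (by omega) (h.mono hti (by omega)) (h'.mono hti (by omega))
    hvv.1.symm hvv.2.symm
  exact ⟨i, hti, by omega, hS _ _ (Or.inr hlk) (hv i hti (by omega))⟩

lemma step (hS : ∀ p q, G.GenStep p q → p ∈ S → q ∈ S)
    (hW : G.PresOn (t - Nat.card (G.V × G.V)) (t + Nat.card (G.V × G.V)) W v e)
    (hmeet : G.WindowMeets S (Nat.card (G.V × G.V)) W (t - Nat.card (G.V × G.V))) :
    G.WindowMeets S (Nat.card (G.V × G.V)) W t := by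
  obtain ⟨j, hj₁, hj₂, hj⟩ := hmeet v e (hW.mono le_rfl (by omega))
  exact of_presOn hS (hW.mono (by omega) le_rfl) fun i h₁ _ =>
    (hW.reach hj₁ (by omega) (by omega)).mem hS hj

end WindowMeets

lemma forall_windowMeets_of_base [Nonempty G.V] {S : Set G.V}
    (hS : ∀ p q, G.GenStep p q → p ∈ S → q ∈ S) {W : ℤ → A}
    (hW : ∀ t, ∃ v e, G.PresOn t (t + (2 * Nat.card (G.V × G.V) : ℕ)) W v e)
    {a : ℤ} (hbase : ∀ t, a ≤ t → t < a + Nat.card (G.V × G.V) →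
      G.WindowMeets S (Nat.card (G.V × G.V)) W t) :
    ∀ t, a ≤ t → G.WindowMeets S (Nat.card (G.V × G.V)) W t := by
  have hκ : 0 < Nat.card (G.V × G.V) := Nat.card_pos
  suffices ∀ m : ℕ, ∀ t, a ≤ t → t < a + Nat.card (G.V × G.V) + m →
      G.WindowMeets S (Nat.card (G.V × G.V)) W t from
    fun t ht => this (t - a).toNat t ht (by omega)
  intro m
  induction m with
  | zero => simpa using hbase
  | succ m ih =>
    intro t h₁ h₂
    rcases lt_or_ge t (a + Nat.card (G.V × G.V) + m) with h | h
    · exact ih t h₁ h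
    · obtain ⟨v, e, hvw⟩ := hW (t - Nat.card (G.V × G.V))
      exact .step hS (hvw.mono le_rfl (by push_cast; omega)) (ih _ (by omega) (by omega))

theorem stronglyConnectedQuot_of_chainTransitive (hG : G.Essential)
    (hct : ChainTransitive G.Sigma') : G.StronglyConnectedQuot := by
  intro u₀ v₀
  have : Nonempty G.V := ⟨u₀⟩
  set κ := Nat.card (G.V × G.V)
  let S : Set G.V := {p | G.GenReach u₀ p}
  have hS : ∀ p q, G.GenStep p q → p ∈ S → q ∈ S := fun _ _ h hp => hp.tail h
  obtain ⟨X, vX, eX, hX, hX₀⟩ := hG.exists_biPresIn_through u₀ (-κ)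
  obtain ⟨Y, vY, eY, hY, hY₀⟩ := hG.exists_biPresIn_through v₀ 0
  obtain ⟨n, hchain⟩ := hct X ⟨vX, eX, hX⟩ Y ⟨vY, eY, hY⟩ ((2 : ℝ) ^ (-((2 * κ : ℕ) : ℤ)))
    (by positivity)
  obtain ⟨W, hWX, hWY, hWz⟩ := exists_word_of_epsChain hchain
  have hW : ∀ t, ∃ v e, G.PresOn t (t + (2 * κ : ℕ)) W v e := by
    intro t
    obtain ⟨z, ⟨vz, ez, hz⟩, c, hzW⟩ := hWz t
    exact ⟨_, _, ((hz.translate c).presOn t (t + (2 * κ : ℕ))).congr_word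
      fun k h₁ h₂ => (hzW k h₁ h₂.le).symm⟩
  have hmeet := forall_windowMeets_of_base hS hW (a := -κ) fun t h₁ h₂ =>
    .of_presOn hS ((hX.presOn t (t + κ)).congr_word fun k _ hk => (hWX k (by omega)).symm)
      fun j hj₁ _ => (hX₀ ▸ (hX.presOn (-κ) j).reach le_rfl (by omega) le_rfl).genReach
  obtain ⟨j, hj₁, hj₂, hjS⟩ := hmeet (n - κ) (by omega) _ _
    (((hY.translate (-n)).presOn _ _).congr_word fun k hk _ => by
      rw [hWY k (by omega), sub_eq_add_neg])
  exact hjS.trans (hY₀ ▸ (hY.presOn (j - n) 0).reach le_rfl (by omega) le_rfl).genReach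

end LGraph

theorem stmt11 {A : Type} [Finite A] (G : LGraph A) (hG : G.Essential) :
    ChainTransitive G.Sigma' ↔ G.StronglyConnectedQuot :=
  ⟨G.stronglyConnectedQuot_of_chainTransitive hG,
    G.chainTransitive_sigma'_of_stronglyConnectedQuot hG⟩
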